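/- arXiv:1501.05445 — 5 statements merged into one kernel-verified Lean document; each statement's English description precedes it below -/
import Mathlib

section
/- Let $b_1 \geq 0$ and let $(g_j)_{j \geq 1}$ be a sequence of positive reals such that $b_2 := \sup\{\tau : \sum_{j=1}^\infty g_j^{1/\tau} < \infty\}$ satisfies $b_2 > \max(b_1, 0)$. Then for every $\tau$ with $b_1 < \tau < b_2$, the sum over all finite subsets $\mathfrak{u} \subset \mathbb{N}$ of $(|\mathfrak{u}|!)^{b_1/\tau} \prod_{j \in \mathfrak{u}} g_j^{1/\tau}$ is finite. -/
open Finset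

/-- Key elementary symmetric function bound: `n! * e_n(x; T) ≤ (∑_{j∈T} x_j)^n`. -/
lemma aux_esymm_le (x : ℕ → ℝ) (hx : ∀ j, 0 ≤ x j) (T : Finset ℕ) :
    ∀ n : ℕ, (n.factorial : ℝ) * ∑ u ∈ T.powersetCard n, ∏ j ∈ u, x j
      ≤ (∑ j ∈ T, x j) ^ n := by
  have hST : 0 ≤ ∑ j ∈ T, x j := Finset.sum_nonneg fun j _ => hx j
  have hE : ∀ n, 0 ≤ ∑ u ∈ T.powersetCard n, ∏ j ∈ u, x j :=
    fun n => Finset.sum_nonneg fun u _ => Finset.prod_nonneg fun j _ => hx j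
  intro n
  induction n with
  | zero => simp
  | succ n ih =>
    -- step: (n+1) * e_{n+1} ≤ e_n * S
    have step : ((n + 1 : ℕ) : ℝ) * ∑ u ∈ T.powersetCard (n+1), ∏ j ∈ u, x j
        ≤ (∑ u ∈ T.powersetCard n, ∏ j ∈ u, x j) * ∑ j ∈ T, x j := by
      have lhs_eq : ((n + 1 : ℕ) : ℝ) * ∑ u ∈ T.powersetCard (n+1), ∏ j ∈ u, x j
          = ∑ u ∈ T.powersetCard (n+1), ∑ j ∈ u, x j * ∏ i ∈ u.erase j, x i := by
        rw [Finset.mul_sum]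
        refine Finset.sum_congr rfl fun u hu => ?_
        obtain ⟨hsub, hcard⟩ := Finset.mem_powersetCard.1 hu
        have : ∀ j ∈ u, x j * ∏ i ∈ u.erase j, x i = ∏ i ∈ u, x i :=
          fun j hj => Finset.mul_prod_erase u x hj
        rw [Finset.sum_congr rfl this, Finset.sum_const, hcard, nsmul_eq_mul]
      have rhs_eq : (∑ u ∈ T.powersetCard n, ∏ j ∈ u, x j) * ∑ j ∈ T, x j
          = ∑ u ∈ T.powersetCard n, ∑ j ∈ T, x j * ∏ i ∈ u, x i := by
        rw [Finset.sum_mul]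
        refine Finset.sum_congr rfl fun u hu => ?_
        rw [Finset.mul_sum]
        exact Finset.sum_congr rfl fun j _ => mul_comm _ _
      rw [lhs_eq, rhs_eq, Finset.sum_sigma', Finset.sum_sigma']
      -- injection (u, j) ↦ (u.erase j, j)
      set A := (T.powersetCard (n+1)).sigma (fun u => u) with hA
      set B := (T.powersetCard n).sigma (fun _ => T) with hB
      set φ : (Σ _ : Finset ℕ, ℕ) → (Σ _ : Finset ℕ, ℕ) := fun p => ⟨p.1.erase p.2, p.2⟩
      have hmem : ∀ p ∈ A, φ p ∈ B := by
        intro p hp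
        obtain ⟨hu, hj⟩ := Finset.mem_sigma.1 hp
        obtain ⟨hsub, hcard⟩ := Finset.mem_powersetCard.1 hu
        refine Finset.mem_sigma.2 ⟨Finset.mem_powersetCard.2 ⟨(Finset.erase_subset _ _).trans hsub, ?_⟩, hsub hj⟩
        rw [Finset.card_erase_of_mem hj, hcard]
        omega
      have hinj : Set.InjOn φ A := by
        intro p hp q hq hpq
        obtain ⟨hu, hj⟩ := Finset.mem_sigma.1 hp
        obtain ⟨hu', hj'⟩ := Finset.mem_sigma.1 hq
        have h2 : p.2 = q.2 := congrArg Sigma.snd hpq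
        have h1 : p.1.erase p.2 = q.1.erase q.2 := by
          have := congrArg Sigma.fst hpq; simpa using this
        have : p.1 = q.1 := by
          rw [← Finset.insert_erase hj, ← Finset.insert_erase hj', h1, h2]
        exact Sigma.ext this (heq_of_eq h2)
      calc ∑ p ∈ A, x p.2 * ∏ i ∈ p.1.erase p.2, x i
          = ∑ q ∈ A.image φ, x q.2 * ∏ i ∈ q.1, x i := by
            rw [Finset.sum_image (fun p hp q hq h => hinj hp hq h)]
        _ ≤ ∑ q ∈ B, x q.2 * ∏ i ∈ q.1, x i := by
            refine Finset.sum_le_sum_of_subset_of_nonneg ?_ ?_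
            · intro q hq
              obtain ⟨p, hp, rfl⟩ := Finset.mem_image.1 hq
              exact hmem p hp
            · intro q _ _
              exact mul_nonneg (hx _) (Finset.prod_nonneg fun i _ => hx i)
    have hfac : ((n+1).factorial : ℝ) = (n.factorial : ℝ) * ((n+1 : ℕ) : ℝ) := by
      push_cast [Nat.factorial_succ]; ring
    calc ((n+1).factorial : ℝ) * ∑ u ∈ T.powersetCard (n+1), ∏ j ∈ u, x j
        = (n.factorial : ℝ) * (((n+1 : ℕ) : ℝ) * ∑ u ∈ T.powersetCard (n+1), ∏ j ∈ u, x j) := by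
          rw [hfac]; ring
      _ ≤ (n.factorial : ℝ) * ((∑ u ∈ T.powersetCard n, ∏ j ∈ u, x j) * ∑ j ∈ T, x j) := by
          exact mul_le_mul_of_nonneg_left step (by positivity)
      _ = ((n.factorial : ℝ) * ∑ u ∈ T.powersetCard n, ∏ j ∈ u, x j) * ∑ j ∈ T, x j := by ring
      _ ≤ (∑ j ∈ T, x j) ^ n * ∑ j ∈ T, x j := mul_le_mul_of_nonneg_right ih hST
      _ = (∑ j ∈ T, x j) ^ (n+1) := by ring

/-- Lemma 5.2 (decay lemma): if `b₁ ≥ 0` and the decay exponent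
`b₂ = sup {τ | ∑_j g_j^{1/τ} < ∞}` of a positive sequence `g` exceeds `max b₁ 0`,
then for every `τ ∈ (b₁, b₂)` the sum over all finite subsets `u ⊂ ℕ` of
`(|u|!)^{b₁/τ} ∏_{j∈u} g_j^{1/τ}` is finite. -/
theorem stmt_1 (b₁ : ℝ) (hb₁ : 0 ≤ b₁) (g : ℕ → ℝ) (hg : ∀ j, 0 < g j)
    (b₂ : ℝ) (hb₂ : b₂ = sSup {τ : ℝ | Summable fun j => g j ^ (1 / τ)})
    (hdecay : max b₁ 0 < b₂)
    (τ : ℝ) (hτ₁ : b₁ < τ) (hτ₂ : τ < b₂) :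
    Summable fun u : Finset ℕ =>
      ((u.card.factorial : ℝ)) ^ (b₁ / τ) * ∏ j ∈ u, g j ^ (1 / τ) := by
  have hτ0 : 0 < τ := lt_of_le_of_lt hb₁ hτ₁
  set Sset := {τ : ℝ | Summable fun j => g j ^ (1 / τ)} with hSset
  -- find τ' ∈ Sset with τ < τ'
  rw [hb₂] at hτ₂
  obtain ⟨τ', hτ'S, hττ'⟩ : ∃ τ' ∈ Sset, τ < τ' := by
    by_cases hbdd : BddAbove Sset
    · have hne : Sset.Nonempty := by
        by_contra hne
        rw [Set.not_nonempty_iff_eq_empty] at hne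
        rw [hne, Real.sSup_empty] at hτ₂
        linarith
      exact exists_lt_of_lt_csSup hne hτ₂
    · obtain ⟨τ', hτ'S, hττ'⟩ := not_bddAbove_iff.1 hbdd τ
      exact ⟨τ', hτ'S, hττ'⟩
  have hτ'0 : 0 < τ' := hτ0.trans hττ'
  have hsum' : Summable fun j => g j ^ (1 / τ') := hτ'S
  -- summability at level τ
  set x : ℕ → ℝ := fun j => g j ^ (1 / τ) with hxdef
  have hx0 : ∀ j, 0 < x j := fun j => Real.rpow_pos_of_pos (hg j) _
  have heq : ∀ j, x j = (g j ^ (1 / τ')) ^ (τ' / τ) := by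
    intro j
    rw [hxdef, ← Real.rpow_mul (hg j).le]
    congr 1
    field_simp
  have hxs : Summable x := by
    have h0 : Filter.Tendsto (fun j => g j ^ (1 / τ')) Filter.atTop (nhds 0) :=
      hsum'.tendsto_atTop_zero
    have hev : ∀ᶠ j in Filter.atTop, ‖x j‖ ≤ 1 * ‖g j ^ (1 / τ')‖ := by
      filter_upwards [h0.eventually_le_const (by norm_num : (0:ℝ) < 1)] with j hj
      rw [one_mul, Real.norm_of_nonneg (hx0 j).le,
        Real.norm_of_nonneg (Real.rpow_pos_of_pos (hg j) _).le, heq j]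
      calc (g j ^ (1 / τ')) ^ (τ' / τ) ≤ (g j ^ (1 / τ')) ^ (1 : ℝ) :=
            Real.rpow_le_rpow_of_exponent_ge (Real.rpow_pos_of_pos (hg j) _) hj
              ((one_le_div hτ0).2 hττ'.le)
        _ = g j ^ (1 / τ') := Real.rpow_one _
    exact summable_of_isBigO_nat hsum' (Asymptotics.IsBigO.of_bound 1 hev)
  set S : ℝ := ∑' j, x j with hSdef
  have hS0 : 0 < S := Summable.tsum_pos hxs (fun j => (hx0 j).le) 0 (hx0 0)
  set β : ℝ := b₁ / τ with hβdef
  have hβ0 : 0 ≤ β := div_nonneg hb₁ hτ0.le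
  have hβ1 : β < 1 := (div_lt_one hτ0).2 hτ₁
  -- the majorant series
  set h : ℕ → ℝ := fun n => (n.factorial : ℝ) ^ (β - 1) * S ^ n with hhdef
  have hh0 : ∀ n, 0 ≤ h n := fun n =>
    mul_nonneg (Real.rpow_nonneg (Nat.cast_nonneg _) _) (pow_nonneg hS0.le n)
  have hhs : Summable h := by
    apply summable_of_ratio_norm_eventually_le (r := 1/2) (by norm_num)
    have htend : Filter.Tendsto (fun n : ℕ => ((n+1 : ℕ) : ℝ) ^ (β - 1) * S)
        Filter.atTop (nhds 0) := by
      have h1 : Filter.Tendsto (fun n : ℕ => ((n+1 : ℕ) : ℝ) ^ (β - 1))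
          Filter.atTop (nhds 0) := by
        have hcomp := (tendsto_rpow_neg_atTop (y := 1 - β) (by linarith)).comp
          ((tendsto_natCast_atTop_atTop (R := ℝ)).comp
            (Filter.tendsto_add_atTop_nat 1))
        have hβe : -(1 - β) = β - 1 := by ring
        rw [hβe] at hcomp
        exact hcomp
      simpa using h1.mul_const S
    filter_upwards [htend.eventually_le_const (by norm_num : (0:ℝ) < 1/2)] with n hn
    have hfacpos : (0:ℝ) < (n.factorial : ℝ) := by positivity
    have hfac : ((n+1).factorial : ℝ) ^ (β - 1)
        = ((n+1 : ℕ) : ℝ) ^ (β - 1) * (n.factorial : ℝ) ^ (β - 1) := by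
      rw [show ((n+1).factorial : ℝ) = ((n+1 : ℕ) : ℝ) * (n.factorial : ℝ) by
        push_cast [Nat.factorial_succ]; ring,
        Real.mul_rpow (by positivity) (by positivity)]
    rw [Real.norm_of_nonneg (hh0 _), Real.norm_of_nonneg (hh0 _)]
    simp only [hhdef]
    rw [hfac, pow_succ]
    calc ((n+1 : ℕ) : ℝ) ^ (β - 1) * (n.factorial : ℝ) ^ (β - 1) * (S ^ n * S)
        = (((n+1 : ℕ) : ℝ) ^ (β - 1) * S) * ((n.factorial : ℝ) ^ (β - 1) * S ^ n) := by
          ring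
      _ ≤ (1/2) * ((n.factorial : ℝ) ^ (β - 1) * S ^ n) := by
          apply mul_le_mul_of_nonneg_right hn
          positivity
  set C : ℝ := ∑' n, h n with hCdef
  -- main bound
  apply summable_of_sum_le (c := C)
  · intro u
    exact mul_nonneg (Real.rpow_nonneg (Nat.cast_nonneg _) _)
      (Finset.prod_nonneg fun j _ => (hx0 j).le)
  · intro V
    set T : Finset ℕ := V.sup id with hTdef
    have hVT : V ⊆ T.powerset := fun u hu =>
      Finset.mem_powerset.2 (Finset.le_sup (f := id) hu)
    have hstep1 : ∑ u ∈ V, (u.card.factorial : ℝ) ^ (b₁ / τ) * ∏ j ∈ u, g j ^ (1/τ)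
        ≤ ∑ u ∈ T.powerset, (u.card.factorial : ℝ) ^ (b₁ / τ) * ∏ j ∈ u, g j ^ (1/τ) := by
      apply Finset.sum_le_sum_of_subset_of_nonneg hVT
      intro u _ _
      exact mul_nonneg (Real.rpow_nonneg (Nat.cast_nonneg _) _)
        (Finset.prod_nonneg fun j _ => (hx0 j).le)
    have hstep2 : ∑ u ∈ T.powerset, (u.card.factorial : ℝ) ^ (b₁ / τ) * ∏ j ∈ u, g j ^ (1/τ)
        = ∑ n ∈ Finset.range (T.card + 1), ∑ u ∈ T.powersetCard n,
            (u.card.factorial : ℝ) ^ (b₁ / τ) * ∏ j ∈ u, g j ^ (1/τ) := by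
      rw [eq_comm]
      have hmaps : ∀ u ∈ T.powerset, u.card ∈ Finset.range (T.card + 1) := by
        intro u hu
        rw [Finset.mem_range, Nat.lt_succ_iff]
        exact Finset.card_le_card (Finset.mem_powerset.1 hu)
      have := Finset.sum_fiberwise_of_maps_to hmaps
        (fun u => (u.card.factorial : ℝ) ^ (b₁ / τ) * ∏ j ∈ u, g j ^ (1/τ))
      rw [← this]
      refine Finset.sum_congr rfl fun n _ => ?_
      refine Finset.sum_congr ?_ fun _ _ => rfl
      rw [Finset.powersetCard_eq_filter]
    have hstep3 : ∀ n, ∑ u ∈ T.powersetCard n,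
          (u.card.factorial : ℝ) ^ (b₁ / τ) * ∏ j ∈ u, g j ^ (1/τ) ≤ h n := by
      intro n
      have hinner : ∑ u ∈ T.powersetCard n,
            (u.card.factorial : ℝ) ^ (b₁ / τ) * ∏ j ∈ u, g j ^ (1/τ)
          = (n.factorial : ℝ) ^ β * ∑ u ∈ T.powersetCard n, ∏ j ∈ u, x j := by
        rw [Finset.mul_sum]
        refine Finset.sum_congr rfl fun u hu => ?_
        rw [(Finset.mem_powersetCard.1 hu).2, hβdef]
      rw [hinner]
      have hesymm := aux_esymm_le x (fun j => (hx0 j).le) T n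
      have hTle : ∑ j ∈ T, x j ≤ S :=
        Summable.sum_le_tsum T (fun j _ => (hx0 j).le) hxs
      have hTpow : (∑ j ∈ T, x j) ^ n ≤ S ^ n :=
        pow_le_pow_left₀ (Finset.sum_nonneg fun j _ => (hx0 j).le) hTle n
      have he : ∑ u ∈ T.powersetCard n, ∏ j ∈ u, x j ≤ S ^ n / (n.factorial : ℝ) := by
        rw [le_div_iff₀ (by positivity : (0:ℝ) < (n.factorial : ℝ))]
        calc (∑ u ∈ T.powersetCard n, ∏ j ∈ u, x j) * (n.factorial : ℝ)
            = (n.factorial : ℝ) * ∑ u ∈ T.powersetCard n, ∏ j ∈ u, x j := mul_comm _ _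
          _ ≤ (∑ j ∈ T, x j) ^ n := hesymm
          _ ≤ S ^ n := hTpow
      calc (n.factorial : ℝ) ^ β * ∑ u ∈ T.powersetCard n, ∏ j ∈ u, x j
          ≤ (n.factorial : ℝ) ^ β * (S ^ n / (n.factorial : ℝ)) :=
            mul_le_mul_of_nonneg_left he (Real.rpow_nonneg (Nat.cast_nonneg _) _)
        _ = h n := by
            have hfpos : (0:ℝ) < (n.factorial : ℝ) := by positivity
            have hkey : (n.factorial : ℝ) ^ β * (S ^ n / (n.factorial : ℝ))
                = (n.factorial : ℝ) ^ (β - 1) * S ^ n := by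
              rw [Real.rpow_sub hfpos, Real.rpow_one]
              field_simp
            rw [hkey, hhdef]
    calc ∑ u ∈ V, (u.card.factorial : ℝ) ^ (b₁ / τ) * ∏ j ∈ u, g j ^ (1/τ)
        ≤ ∑ n ∈ Finset.range (T.card + 1), ∑ u ∈ T.powersetCard n,
            (u.card.factorial : ℝ) ^ (b₁ / τ) * ∏ j ∈ u, g j ^ (1/τ) :=
          hstep1.trans_eq hstep2
      _ ≤ ∑ n ∈ Finset.range (T.card + 1), h n :=
          Finset.sum_le_sum fun n _ => hstep3 n
      _ ≤ C := Summable.sum_le_tsum _ (fun n _ => hh0 n) hhs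
end

section
/- Define $b(1,\kappa) = 1$ for all integers $\kappa \geq 1$, and for $d \geq 2$ and $\kappa \geq d$ define recursively $b(d,\kappa) = b(d-1,\kappa-1) + \sum_{s=d-1}^{\kappa-1} b(d-1,s)$. Then for all $d \geq 2$ and $\kappa \geq d$, $b(d,\kappa) \leq \frac{e^{d/2-1}\, \kappa^{d-1}}{(d-1)!}$. -/
open Finset

/-- Midpoint-style inequality: `d * x^(d-1) ≤ (x+1/2)^d - (x-1/2)^d` for `x ≥ 1/2`. -/
lemma aux_mid (x : ℝ) (hx : (1:ℝ)/2 ≤ x) (d : ℕ) (hd : 1 ≤ d) :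
    (d : ℝ) * x ^ (d - 1) ≤ (x + 1/2) ^ d - (x - 1/2) ^ d := by
  have hx0 : (0:ℝ) ≤ x := le_trans (by norm_num) hx
  have h1 : (x + 1/2) ^ d = ∑ k ∈ range (d + 1), x ^ k * (1/2:ℝ) ^ (d - k) * d.choose k :=
    add_pow x (1/2) d
  have h2 : (x + (-(1/2))) ^ d
      = ∑ k ∈ range (d + 1), x ^ k * (-(1/2):ℝ) ^ (d - k) * d.choose k :=
    add_pow x (-(1/2)) d
  have hsub : (x - 1/2) ^ d = (x + (-(1/2))) ^ d := by ring_nf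
  rw [hsub, h1, h2, ← Finset.sum_sub_distrib]
  have key : ∀ k ∈ range (d + 1),
      (0:ℝ) ≤ x ^ k * (1/2:ℝ) ^ (d - k) * d.choose k
        - x ^ k * (-(1/2):ℝ) ^ (d - k) * d.choose k := by
    intro k _
    have hneg : (-(1/2):ℝ) ^ (d - k) ≤ (1/2:ℝ) ^ (d - k) := by
      calc (-(1/2):ℝ) ^ (d - k) ≤ |(-(1/2):ℝ) ^ (d - k)| := le_abs_self _
        _ = (1/2:ℝ) ^ (d - k) := by rw [abs_pow, abs_neg, abs_of_pos]; norm_num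
    have := mul_le_mul_of_nonneg_right
      (mul_le_mul_of_nonneg_left hneg (pow_nonneg hx0 k))
      (Nat.cast_nonneg (α := ℝ) (d.choose k))
    linarith
  have hmem : d - 1 ∈ range (d + 1) := Finset.mem_range.mpr (by omega)
  have hterm : (d:ℝ) * x ^ (d - 1)
      = x ^ (d - 1) * (1/2:ℝ) ^ (d - (d - 1)) * d.choose (d - 1)
        - x ^ (d - 1) * (-(1/2):ℝ) ^ (d - (d - 1)) * d.choose (d - 1) := by
    have h3 : d - (d - 1) = 1 := by omega
    have h4 : d.choose (d - 1) = d := by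
      have : d = (d - 1) + 1 := by omega
      rw [this]; simp [Nat.choose_succ_self_right]
    rw [h3, h4]; ring
  rw [hterm]
  exact Finset.single_le_sum key hmem

/-- `∑_{s=d}^{κ} s^(d-1) ≤ (κ + 1/2)^d / d` for `1 ≤ d ≤ κ`. -/
lemma aux_sum_pow (d κ : ℕ) (hd : 1 ≤ d) (hκ : d ≤ κ) :
    ∑ s ∈ Icc d κ, (s : ℝ) ^ (d - 1) ≤ ((κ : ℝ) + 1/2) ^ d / d := by
  have hd0 : (0:ℝ) < d := by exact_mod_cast hd
  rw [div_eq_inv_mul, ← Finset.Ico_add_one_right_eq_Icc, Finset.sum_Ico_eq_sum_range]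
  have tel : ∑ i ∈ range (κ + 1 - d),
        ((((d:ℝ) + ((i+1 : ℕ):ℝ)) - 1/2) ^ d - (((d:ℝ) + ((i : ℕ):ℝ)) - 1/2) ^ d)
      = (((d:ℝ) + ((κ + 1 - d : ℕ):ℝ)) - 1/2) ^ d - (((d:ℝ) + ((0:ℕ):ℝ)) - 1/2) ^ d :=
    Finset.sum_range_sub (fun j : ℕ => (((d:ℝ) + (j:ℝ)) - 1/2) ^ d) (κ + 1 - d)
  calc ∑ i ∈ range (κ + 1 - d), ((d + i : ℕ) : ℝ) ^ (d - 1)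
      ≤ ∑ i ∈ range (κ + 1 - d),
          (d:ℝ)⁻¹ * ((((d:ℝ) + ((i+1 : ℕ):ℝ)) - 1/2) ^ d - (((d:ℝ) + ((i : ℕ):ℝ)) - 1/2) ^ d) := by
        refine Finset.sum_le_sum fun i _ => ?_
        have hx : (1:ℝ)/2 ≤ (d:ℝ) + i := by
          have h5 : (1:ℝ) ≤ (d:ℝ) := by exact_mod_cast hd
          have h6 : (0:ℝ) ≤ (i:ℝ) := Nat.cast_nonneg i
          linarith
        have h := aux_mid ((d:ℝ) + i) hx d hd
        rw [le_inv_mul_iff₀ hd0]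
        push_cast
        push_cast at h
        have heq : ((d:ℝ) + ((i:ℝ) + 1) - 1/2) = (d:ℝ) + (i:ℝ) + 1/2 := by ring
        rw [heq]
        linarith [h]
    _ = (d:ℝ)⁻¹ * ((((d:ℝ) + ((κ + 1 - d : ℕ):ℝ)) - 1/2) ^ d - (((d:ℝ) + ((0:ℕ):ℝ)) - 1/2) ^ d) := by
        rw [← Finset.mul_sum, tel]
    _ ≤ (d:ℝ)⁻¹ * (((κ:ℝ) + 1/2) ^ d) := by
        have hcast : ((κ + 1 - d : ℕ) : ℝ) = (κ:ℝ) + 1 - d := by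
          have h7 : d ≤ κ + 1 := by omega
          push_cast [h7]; ring
        rw [hcast]
        have h1 : ((d:ℝ) + ((κ:ℝ) + 1 - d)) - 1/2 = (κ:ℝ) + 1/2 := by ring
        rw [h1]
        have h2 : (0:ℝ) ≤ ((d:ℝ) + ((0:ℕ):ℝ) - 1/2) ^ d := by
          apply pow_nonneg
          have h8 : (1:ℝ) ≤ (d:ℝ) := by exact_mod_cast hd
          simp only [Nat.cast_zero]
          linarith
        have h9 := inv_nonneg.mpr (le_of_lt hd0)
        nlinarith

/-- `(κ + 1/2)^d ≤ e^(1/2) κ^d` when `d ≤ κ`. -/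
lemma aux_exp (d κ : ℕ) (hd : 1 ≤ d) (hκ : d ≤ κ) :
    ((κ : ℝ) + 1/2) ^ d ≤ Real.exp (1/2) * (κ : ℝ) ^ d := by
  have hκ0 : (0:ℝ) < κ := by
    have : 1 ≤ κ := le_trans hd hκ
    exact_mod_cast this
  have h1 : (κ:ℝ) + 1/2 = (κ:ℝ) * (1 + 1/(2*κ)) := by field_simp
  rw [h1, mul_pow]
  have h2 : (1 + 1/(2*(κ:ℝ))) ^ d ≤ Real.exp (d / (2*κ)) := by
    have h3 : (1:ℝ) + 1/(2*κ) ≤ Real.exp (1/(2*κ)) := by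
      have := Real.add_one_le_exp (1/(2*(κ:ℝ)))
      linarith
    calc (1 + 1/(2*(κ:ℝ))) ^ d ≤ (Real.exp (1/(2*κ))) ^ d := by
          apply pow_le_pow_left₀ (by positivity) h3
      _ = Real.exp (d / (2*κ)) := by
          rw [← Real.exp_nat_mul]; ring_nf
  have h4 : Real.exp ((d:ℝ) / (2*κ)) ≤ Real.exp (1/2) := by
    apply Real.exp_le_exp.mpr
    rw [div_le_div_iff₀ (by positivity) (by norm_num)]
    have : (d:ℝ) ≤ κ := by exact_mod_cast hκ
    linarith
  calc (κ:ℝ) ^ d * (1 + 1/(2*κ)) ^ d ≤ (κ:ℝ) ^ d * Real.exp (1/2) := by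
        apply mul_le_mul_of_nonneg_left (le_trans h2 h4) (by positivity)
    _ = Real.exp (1/2) * (κ:ℝ) ^ d := by ring

/-- If `b(1,κ) = 1` for all `κ ≥ 1` and for `d ≥ 2`, `κ ≥ d` one has
`b(d,κ) = b(d-1,κ-1) + ∑_{s=d-1}^{κ-1} b(d-1,s)`, then for all `d ≥ 2`, `κ ≥ d`,
`b(d,κ) ≤ e^{d/2-1} κ^{d-1} / (d-1)!`. -/
theorem stmt_4 (b : ℕ → ℕ → ℝ)
    (h1 : ∀ κ, 1 ≤ κ → b 1 κ = 1)
    (hrec : ∀ d κ, 2 ≤ d → d ≤ κ →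
      b d κ = b (d - 1) (κ - 1) + ∑ s ∈ Finset.Icc (d - 1) (κ - 1), b (d - 1) s)
    (d κ : ℕ) (hd : 2 ≤ d) (hκ : d ≤ κ) :
    b d κ ≤ Real.exp ((d : ℝ) / 2 - 1) * (κ : ℝ) ^ (d - 1) / (d - 1).factorial := by
  have main : ∀ d : ℕ, 2 ≤ d → ∀ κ : ℕ, d ≤ κ →
      b d κ ≤ Real.exp ((d : ℝ) / 2 - 1) * (κ : ℝ) ^ (d - 1) / (d - 1).factorial := by
    intro d hd
    induction d, hd using Nat.le_induction with
    | base =>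
      intro κ hκ
      have hval : b 2 κ = κ := by
        rw [hrec 2 κ le_rfl hκ]
        have h1' : b 1 (κ - 1) = 1 := h1 (κ - 1) (by omega)
        have h2' : ∑ s ∈ Finset.Icc (2 - 1) (κ - 1), b 1 s
            = ∑ s ∈ Finset.Icc 1 (κ - 1), (1:ℝ) := by
          apply Finset.sum_congr rfl
          intro s hs
          simp only [Finset.mem_Icc] at hs
          exact h1 s hs.1
        rw [show (2:ℕ) - 1 = 1 from rfl] at h2' ⊢
        rw [h1', h2', Finset.sum_const, Nat.card_Icc]
        have : κ - 1 + 1 - 1 = κ - 1 := by omega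
        rw [this]
        have hc : ((κ - 1 : ℕ) : ℝ) = (κ:ℝ) - 1 := by
          have : 1 ≤ κ := by omega
          push_cast [this]; ring
        rw [nsmul_eq_mul, hc]; ring
      rw [hval]
      norm_num
    | succ d hd2 IH =>
      intro κ hκ
      have hκ1 : d ≤ κ - 1 := by omega
      have hd1 : 1 ≤ d := by omega
      have hdκ : d ≤ κ := by omega
      have hfac : (0:ℝ) < (d - 1).factorial := by positivity
      have hC : (0:ℝ) < Real.exp ((d:ℝ)/2 - 1) / (d - 1).factorial := by positivity
      rw [hrec (d+1) κ (by omega) hκ]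
      simp only [Nat.add_sub_cancel]
      -- bound the first term
      have hb1 : b d (κ - 1)
          ≤ Real.exp ((d:ℝ)/2 - 1) * (κ:ℝ) ^ (d - 1) / (d - 1).factorial := by
        refine le_trans (IH (κ - 1) hκ1) ?_
        have hle : ((κ - 1 : ℕ):ℝ) ^ (d - 1) ≤ (κ:ℝ) ^ (d - 1) := by
          apply pow_le_pow_left₀ (Nat.cast_nonneg _)
          exact_mod_cast Nat.sub_le κ 1
        rw [div_le_div_iff_of_pos_right hfac]
        exact mul_le_mul_of_nonneg_left hle (Real.exp_nonneg _)
      -- bound the sum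
      have hb2 : ∑ s ∈ Finset.Icc d (κ - 1), b d s
          ≤ ∑ s ∈ Finset.Icc d (κ - 1),
              Real.exp ((d:ℝ)/2 - 1) * (s:ℝ) ^ (d - 1) / (d - 1).factorial := by
        apply Finset.sum_le_sum
        intro s hs
        simp only [Finset.mem_Icc] at hs
        exact IH s hs.1
      -- combine
      have hsum : (κ:ℝ) ^ (d - 1) + ∑ s ∈ Finset.Icc d (κ - 1), (s:ℝ) ^ (d - 1)
          = ∑ s ∈ Finset.Icc d κ, (s:ℝ) ^ (d - 1) := by
        obtain ⟨m, rfl⟩ : ∃ m, κ = m + 1 := ⟨κ - 1, by omega⟩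
        rw [Finset.sum_Icc_succ_top (by omega : d ≤ m + 1)]
        simp [Nat.add_sub_cancel]
        ring
      have hkey : ∑ s ∈ Finset.Icc d κ, (s:ℝ) ^ (d - 1)
          ≤ Real.exp (1/2) * (κ:ℝ) ^ d / d := by
        refine le_trans (aux_sum_pow d κ hd1 hdκ) ?_
        rw [div_le_div_iff₀ (by exact_mod_cast hd1 : (0:ℝ) < d) (by exact_mod_cast hd1)]
        have := aux_exp d κ hd1 hdκ
        nlinarith [this, (by exact_mod_cast hd1 : (0:ℝ) < (d:ℝ))]
      have hfinal : Real.exp ((d:ℝ)/2 - 1) / (d - 1).factorial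
            * (Real.exp (1/2) * (κ:ℝ) ^ d / d)
          = Real.exp (((d:ℝ)+1)/2 - 1) * (κ:ℝ) ^ d / d.factorial := by
        have hfacd : (d.factorial : ℝ) = d * (d - 1).factorial := by
          exact_mod_cast (Nat.mul_factorial_pred (by omega)).symm
        rw [hfacd, show ((d:ℝ)+1)/2 - 1 = ((d:ℝ)/2 - 1) + 1/2 by ring, Real.exp_add]
        have hd0 : (0:ℝ) < (d:ℝ) := by exact_mod_cast hd1
        field_simp
      calc b d (κ - 1) + ∑ s ∈ Finset.Icc d (κ - 1), b d s
          ≤ Real.exp ((d:ℝ)/2 - 1) * (κ:ℝ) ^ (d - 1) / (d - 1).factorial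
            + ∑ s ∈ Finset.Icc d (κ - 1),
                Real.exp ((d:ℝ)/2 - 1) * (s:ℝ) ^ (d - 1) / (d - 1).factorial :=
            add_le_add hb1 hb2
        _ = Real.exp ((d:ℝ)/2 - 1) / (d - 1).factorial
            * ((κ:ℝ) ^ (d - 1) + ∑ s ∈ Finset.Icc d (κ - 1), (s:ℝ) ^ (d - 1)) := by
            rw [mul_add, Finset.mul_sum]
            congr 1
            · ring
            · exact Finset.sum_congr rfl fun s _ => by ring
        _ = Real.exp ((d:ℝ)/2 - 1) / (d - 1).factorial
            * ∑ s ∈ Finset.Icc d κ, (s:ℝ) ^ (d - 1) := by rw [hsum]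
        _ ≤ Real.exp ((d:ℝ)/2 - 1) / (d - 1).factorial
            * (Real.exp (1/2) * (κ:ℝ) ^ d / d) :=
            mul_le_mul_of_nonneg_left hkey (le_of_lt hC)
        _ = Real.exp (((d:ℝ)+1)/2 - 1) * (κ:ℝ) ^ d / d.factorial := hfinal
        _ = Real.exp (((d+1:ℕ):ℝ)/2 - 1) * (κ:ℝ) ^ ((d+1) - 1) / ((d+1) - 1).factorial := by
            push_cast
            simp
  exact main d hd κ hκ
end

section
/- Let $n(d,\kappa)$ be the number of quadrature points used by the trapezoidal Smolyak algorithm, satisfying $n(1,\kappa) = 2^\kappa$ and for $d \geq 2$, $n(d,\kappa) = 2 n(d-1, \kappa-1) + \sum_{s=2}^{\kappa-d+1} 2^{s-1} n(d-1, \kappa-s)$ for $\kappa \geq d$. Then for all $d \geq 2$ and $\kappa \geq d$: $2^{\kappa-d+1} \leq n(d,\kappa) \leq 2^{\kappa-d+1} e^{d/2-1} \frac{\kappa^{d-1}}{(d-1)!}$. -/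
/-!
Both bounds go by induction on `d`. Written as
`n(d+1,κ) = n(d,κ-1) + ∑_{s=1}^{κ-d} 2^{s-1} n(d,κ-s)`, the recursion turns the inductive upper
bound for every term into the same power `2^{κ-d}`, and what is left is
`d ((κ-1)^{d-1} + ∑_s (κ-s)^{d-1}) ≤ √e κ^d`: the sum is at most `∫₀^κ t^{d-1} dt = κ^d/d`, and
`d (κ-1)^{d-1} ≤ e^{-1/2} κ^d ≤ (√e - 1) κ^d` follows from `1 - 1/κ ≤ e^{-1/κ}` and
`d/κ ≤ e^{d/κ - 1}`. The induction starts at `d = 2`, where `n(2,κ) = κ 2^{κ-1}` attains the bound.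
-/

open Finset Real

theorem sum_range_pow_le (K k : ℕ) :
    ∑ t ∈ range K, (t : ℝ) ^ k ≤ (K : ℝ) ^ (k + 1) / (k + 1) := by
  have hmono : MonotoneOn (fun x : ℝ => x ^ k) (Set.Icc 0 (0 + K)) := fun x hx _ _ hxy =>
    pow_le_pow_left₀ hx.1 hxy k
  simpa [integral_pow] using hmono.sum_le_integral

theorem exp_neg_half_le_exp_half_sub_one : exp (-(1 / 2)) ≤ exp (1 / 2) - 1 := by
  have hsq : exp (1 / 2) * exp (1 / 2) = exp 1 := by rw [← exp_add]; norm_num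
  rw [exp_neg, inv_le_iff_one_le_mul₀ (exp_pos _)]
  nlinarith [exp_one_gt_d9, exp_pos (1 / 2 : ℝ)]

theorem succ_mul_sub_one_pow_le (m : ℕ) {x : ℝ} (hx : 2 ≤ x) :
    (m + 1) * (x - 1) ^ m ≤ exp (-(1 / 2)) * x ^ (m + 1) := by
  have hx0 : 0 < x := by linarith
  have hbase : (x - 1) ^ m ≤ x ^ m * exp (-(m / x)) :=
    calc (x - 1) ^ m = x ^ m * (1 - 1 / x) ^ m := by
          rw [← mul_pow]; congr 1; field_simp
      _ ≤ x ^ m * exp (-(1 / x)) ^ m := by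
          gcongr
          · rw [sub_nonneg, div_le_one hx0]; linarith
          · exact one_sub_le_exp_neg _
      _ = x ^ m * exp (-(m / x)) := by rw [← exp_nat_mul]; ring_nf
  have hcoef : (m + 1 : ℝ) ≤ x * exp ((m + 1) / x - 1) := by
    have := add_one_le_exp ((m + 1) / x - 1)
    rw [sub_add_cancel, div_le_iff₀ hx0] at this
    linarith
  have hexp : exp (1 / x - 1) ≤ exp (-(1 / 2)) := by
    have : 1 / x ≤ 1 / 2 := one_div_le_one_div_of_le two_pos hx
    exact exp_le_exp.2 (by linarith)
  calc (m + 1) * (x - 1) ^ m ≤ x * exp ((m + 1) / x - 1) * (x ^ m * exp (-(m / x))) := by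
        gcongr
        exact pow_nonneg (by linarith) m
    _ = x ^ (m + 1) * exp (1 / x - 1) := by
        rw [mul_mul_mul_comm, ← exp_add, pow_succ']
        congr 2
        field_simp
        ring
    _ ≤ exp (-(1 / 2)) * x ^ (m + 1) := by rw [mul_comm]; gcongr

theorem mul_sub_one_pow_add_sum_le {d κ : ℕ} (hd : 1 ≤ d) (hκ : d < κ) :
    d * (((κ - 1 : ℕ) : ℝ) ^ (d - 1) + ∑ s ∈ Icc 1 (κ - d), ((κ - s : ℕ) : ℝ) ^ (d - 1)) ≤
      exp (1 / 2) * κ ^ d := by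
  have hd0 : (0 : ℝ) < d := by exact_mod_cast hd
  have htail : ∑ s ∈ Icc 1 (κ - d), ((κ - s : ℕ) : ℝ) ^ (d - 1) ≤ κ ^ d / d :=
    calc ∑ s ∈ Icc 1 (κ - d), ((κ - s : ℕ) : ℝ) ^ (d - 1)
        = ∑ t ∈ (Icc 1 (κ - d)).image (κ - ·), (t : ℝ) ^ (d - 1) := by
          rw [sum_image]
          intro a ha b hb h
          simp only [coe_Icc, Set.mem_Icc] at ha hb h
          omega
      _ ≤ ∑ t ∈ range κ, (t : ℝ) ^ (d - 1) :=
          sum_le_sum_of_subset_of_nonneg (by intro t; simp; omega) fun _ _ _ => by positivity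
      _ ≤ κ ^ d / d := by
          have := sum_range_pow_le κ (d - 1)
          rwa [Nat.sub_add_cancel hd, Nat.cast_sub hd, Nat.cast_one, sub_add_cancel] at this
  have hhead : d * ((κ - 1 : ℕ) : ℝ) ^ (d - 1) ≤ (exp (1 / 2) - 1) * κ ^ d := by
    obtain ⟨m, rfl⟩ : ∃ m, d = m + 1 := ⟨d - 1, by omega⟩
    have hκ2 : (2 : ℝ) ≤ κ := by exact_mod_cast (show 2 ≤ κ by omega)
    push_cast [Nat.cast_sub (show 1 ≤ κ by omega), Nat.add_sub_cancel]
    calc (m + 1) * ((κ : ℝ) - 1) ^ m ≤ exp (-(1 / 2)) * κ ^ (m + 1) :=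
          succ_mul_sub_one_pow_le m hκ2
      _ ≤ (exp (1 / 2) - 1) * κ ^ (m + 1) := by gcongr; exact exp_neg_half_le_exp_half_sub_one
  rw [le_div_iff₀ hd0] at htail
  linarith

def SmolyakRecursion (n : ℕ → ℕ → ℝ) : Prop :=
  ∀ d κ, 2 ≤ d → d ≤ κ →
    n d κ = 2 * n (d - 1) (κ - 1) + ∑ s ∈ Icc 2 (κ - d + 1), 2 ^ (s - 1) * n (d - 1) (κ - s)

namespace SmolyakRecursion

variable {n : ℕ → ℕ → ℝ}

theorem succ_eq (hrec : SmolyakRecursion n) {d κ : ℕ} (hd : 1 ≤ d) (hκ : d < κ) :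
    n (d + 1) κ = n d (κ - 1) + ∑ s ∈ Icc 1 (κ - d), 2 ^ (s - 1) * n d (κ - s) := by
  rw [hrec (d + 1) κ (by omega) hκ, Nat.add_sub_cancel, show κ - (d + 1) + 1 = κ - d by omega,
    ← insert_Icc_add_one_left_eq_Icc (show 1 ≤ κ - d by omega), sum_insert (by simp)]
  ring_nf

theorem two_pow_le (h1 : ∀ κ, 1 ≤ κ → n 1 κ = 2 ^ κ) (hrec : SmolyakRecursion n) {d κ : ℕ}
    (hd : 1 ≤ d) (hκ : d ≤ κ) : (2 : ℝ) ^ (κ - d + 1) ≤ n d κ := by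
  induction d, hd using Nat.le_induction generalizing κ with
  | base => rw [h1 κ hκ, Nat.sub_add_cancel hκ]
  | succ d hd ih =>
    have hnonneg : ∀ m, d ≤ m → 0 ≤ n d m := fun m hm => (pow_pos two_pos _).le.trans (ih hm)
    have htail : 0 ≤ ∑ s ∈ Icc 2 (κ - (d + 1) + 1), (2 : ℝ) ^ (s - 1) * n d (κ - s) :=
      sum_nonneg fun s hs => mul_nonneg (by positivity) (hnonneg _ (by simp at hs; omega))
    have hhead := ih (κ := κ - 1) (by omega)
    rw [hrec (d + 1) κ (by omega) hκ, Nat.add_sub_cancel]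
    calc (2 : ℝ) ^ (κ - (d + 1) + 1) = 2 ^ (κ - 1 - d + 1) := by congr 1; omega
      _ ≤ _ := by linarith [hnonneg (κ - 1) (by omega)]

theorem apply_two (h1 : ∀ κ, 1 ≤ κ → n 1 κ = 2 ^ κ) (hrec : SmolyakRecursion n) {κ : ℕ}
    (hκ : 2 ≤ κ) : n 2 κ = κ * 2 ^ (κ - 1) := by
  refine (hrec.succ_eq le_rfl hκ).trans ?_
  have hterm : ∀ s ∈ Icc 1 (κ - 1), (2 : ℝ) ^ (s - 1) * n 1 (κ - s) = 2 ^ (κ - 1) := by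
    intro s hs
    rw [mem_Icc] at hs
    rw [h1 _ (by omega), ← pow_add]
    congr 1
    omega
  rw [sum_congr rfl hterm, sum_const, Nat.card_Icc, nsmul_eq_mul, h1 _ (by omega),
    Nat.add_sub_cancel, Nat.cast_sub (by omega)]
  ring

theorem le_two_pow_mul_exp (h1 : ∀ κ, 1 ≤ κ → n 1 κ = 2 ^ κ) (hrec : SmolyakRecursion n)
    {d κ : ℕ} (hd : 2 ≤ d) (hκ : d ≤ κ) :
    n d κ ≤ 2 ^ (κ - d + 1) * exp ((d : ℝ) / 2 - 1) * κ ^ (d - 1) / (d - 1).factorial := by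
  induction d, hd using Nat.le_induction generalizing κ with
  | base =>
    rw [hrec.apply_two h1 hκ, show κ - 2 + 1 = κ - 1 by omega]
    simp [mul_comm]
  | succ d hd ih =>
    set c := exp ((d : ℝ) / 2 - 1) / (d - 1).factorial with hc
    have hterm : ∀ s ∈ Icc 1 (κ - d),
        2 ^ (s - 1) * n d (κ - s) ≤ 2 ^ (κ - d) * c * ((κ - s : ℕ) : ℝ) ^ (d - 1) := by
      intro s hs
      rw [mem_Icc] at hs
      have hpow : (2 : ℝ) ^ (κ - d) = 2 ^ (s - 1) * 2 ^ (κ - s - d + 1) := by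
        rw [← pow_add]; congr 1; omega
      calc 2 ^ (s - 1) * n d (κ - s)
          ≤ 2 ^ (s - 1) * (2 ^ (κ - s - d + 1) * exp ((d : ℝ) / 2 - 1) *
              ((κ - s : ℕ) : ℝ) ^ (d - 1) / (d - 1).factorial) := by
            gcongr; exact ih (by omega)
        _ = 2 ^ (κ - d) * c * ((κ - s : ℕ) : ℝ) ^ (d - 1) := by rw [hpow]; ring
    have hhead : n d (κ - 1) ≤ 2 ^ (κ - d) * c * ((κ - 1 : ℕ) : ℝ) ^ (d - 1) := by
      simpa using hterm 1 (by simp; omega)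
    rw [hrec.succ_eq (by omega) hκ]
    calc n d (κ - 1) + ∑ s ∈ Icc 1 (κ - d), 2 ^ (s - 1) * n d (κ - s)
        ≤ 2 ^ (κ - d) * c * (((κ - 1 : ℕ) : ℝ) ^ (d - 1) +
            ∑ s ∈ Icc 1 (κ - d), ((κ - s : ℕ) : ℝ) ^ (d - 1)) := by
          rw [mul_add, mul_sum]; exact add_le_add hhead (sum_le_sum hterm)
      _ ≤ 2 ^ (κ - d) * c * (exp (1 / 2) * κ ^ d / d) := by
          gcongr
          rw [le_div_iff₀ (by positivity), mul_comm]
          exact mul_sub_one_pow_add_sum_le (by omega) hκ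
      _ = _ := by
          have hexp : exp (((d + 1 : ℕ) : ℝ) / 2 - 1) = exp ((d : ℝ) / 2 - 1) * exp (1 / 2) := by
            rw [← exp_add]; push_cast; ring_nf
          rw [show κ - (d + 1) + 1 = κ - d by omega, Nat.add_sub_cancel,
            ← Nat.mul_factorial_pred (show d ≠ 0 by omega), Nat.cast_mul, hexp, hc]
          field_simp

end SmolyakRecursion

/-- Bounds on the number `n(d,κ)` of points of the trapezoidal-Smolyak rule:
given `n(1,κ) = 2^κ` and, for `d ≥ 2` and `κ ≥ d`,
`n(d,κ) = 2 n(d-1,κ-1) + ∑_{s=2}^{κ-d+1} 2^{s-1} n(d-1,κ-s)`, one has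
`2^{κ-d+1} ≤ n(d,κ) ≤ 2^{κ-d+1} e^{d/2-1} κ^{d-1}/(d-1)!` for all `d ≥ 2`, `κ ≥ d`. -/
theorem stmt_5 (n : ℕ → ℕ → ℝ)
    (h1 : ∀ κ, 1 ≤ κ → n 1 κ = 2 ^ κ)
    (hrec : ∀ d κ, 2 ≤ d → d ≤ κ →
      n d κ = 2 * n (d - 1) (κ - 1) +
        ∑ s ∈ Finset.Icc 2 (κ - d + 1), 2 ^ (s - 1) * n (d - 1) (κ - s))
    (d κ : ℕ) (hd : 2 ≤ d) (hκ : d ≤ κ) :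
    (2 : ℝ) ^ (κ - d + 1) ≤ n d κ ∧
      n d κ ≤ 2 ^ (κ - d + 1) * Real.exp ((d : ℝ) / 2 - 1) *
        (κ : ℝ) ^ (d - 1) / (d - 1).factorial :=
  ⟨SmolyakRecursion.two_pow_le h1 hrec (by omega) hκ,
    SmolyakRecursion.le_two_pow_mul_exp h1 hrec hd hκ⟩
end

section
/- Let $\mu$ be a probability measure on a measurable space and $\mu^{\mathbb{N}}$ the countable product measure. Suppose $(f_d)_{d\geq 0}$ are integrable functions on the product space, each $f_d$ depending only on the first $d$ coordinates, converging pointwise a.e. to an integrable function $f$, and suppose for a.e. $\boldsymbol{x}$ and all $d$, $|f_d(\boldsymbol{x}) - f(\boldsymbol{x})| \leq g_d(x_1,\ldots,x_d)$ where $(g_d)$ are integrable functions converging dominantly to zero (i.e., $g_d \to 0$ a.e. and $|g_d| \leq |g|$ a.e. for some integrable $g$). Then for $\mu^{\mathbb{N}}$-almost every anchor $\boldsymbol{a} = (a_1,a_2,\ldots)$, $\lim_{d\to\infty} \int f(x_1,\ldots,x_d,a_{d+1},a_{d+2},\ldots)\, d\mu^d(x_1,\ldots,x_d) = \int f \, d\mu^{\mathbb{N}}$.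 -/
open MeasureTheory Filter

namespace Stmt8Aux

variable {Ω : Type*} [MeasurableSpace Ω]

def boxes (Ω : Type*) [MeasurableSpace Ω] : Set (Set (ℕ → Ω)) :=
  {S | ∃ (s : Finset ℕ) (A : ℕ → Set Ω),
    (∀ i, MeasurableSet (A i)) ∧ S = {x | ∀ i ∈ s, x i ∈ A i}}

lemma box_measurable (s : Finset ℕ) (A : ℕ → Set Ω) (hA : ∀ i, MeasurableSet (A i)) :
    MeasurableSet {x : ℕ → Ω | ∀ i ∈ s, x i ∈ A i} := by
  have h : {x : ℕ → Ω | ∀ i ∈ s, x i ∈ A i} = ⋂ i ∈ s, (fun x => x i) ⁻¹' A i := by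
    ext x; simp
  rw [h]
  exact MeasurableSet.biInter s.countable_toSet fun i _ => (measurable_pi_apply i) (hA i)

lemma generateFrom_boxes :
    (MeasurableSpace.pi : MeasurableSpace (ℕ → Ω)) =
      MeasurableSpace.generateFrom (boxes Ω) := by
  apply le_antisymm
  · show (⨆ i : ℕ, (inferInstance : MeasurableSpace Ω).comap fun x : ℕ → Ω => x i) ≤ _
    refine iSup_le fun i => ?_
    have hm : @Measurable (ℕ → Ω) Ω (MeasurableSpace.generateFrom (boxes Ω)) _
        (fun x => x i) := by
      intro A hA
      refine MeasurableSpace.measurableSet_generateFrom ?_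
      exact ⟨{i}, fun _ => A, fun _ => hA, by ext x; simp⟩
    exact (@measurable_iff_comap_le _ _ (MeasurableSpace.generateFrom (boxes Ω)) _ _).mp hm
  · refine MeasurableSpace.generateFrom_le ?_
    rintro S ⟨s, A, hA, rfl⟩
    exact box_measurable s A hA

lemma isPiSystem_boxes : IsPiSystem (boxes Ω) := by
  classical
  rintro S1 ⟨s, A, hA, rfl⟩ S2 ⟨t, B, hB, rfl⟩ -
  refine ⟨s ∪ t, fun i => (if i ∈ s then A i else Set.univ) ∩ (if i ∈ t then B i else Set.univ),
    fun i => ?_, ?_⟩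
  · by_cases h1 : i ∈ s <;> by_cases h2 : i ∈ t <;>
      simp [h1, h2, hA i, hB i, (hA i).inter (hB i)]
  · ext x
    simp only [Set.mem_inter_iff, Set.mem_setOf_eq, Finset.mem_union]
    constructor
    · rintro ⟨h1, h2⟩ i hi
      constructor
      · split_ifs with h
        · exact h1 i h
        · exact Set.mem_univ _
      · split_ifs with h
        · exact h2 i h
        · exact Set.mem_univ _
    · intro h
      constructor
      · intro i hi
        have := (h i (Or.inl hi)).1
        simpa [hi] using this
      · intro i hi
        have := (h i (Or.inr hi)).2
        simpa [hi] using this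

/-- splice d (a, x) replaces coordinates ≥ d of x by those of a. -/
def splice (d : ℕ) (p : (ℕ → Ω) × (ℕ → Ω)) : ℕ → Ω := fun i => if i < d then p.2 i else p.1 i

lemma measurable_splice (d : ℕ) : Measurable (splice (Ω := Ω) d) := by
  apply measurable_pi_lambda
  intro i
  by_cases h : i < d <;> simp only [splice, h, if_true, if_false]
  · exact (measurable_pi_apply i).comp measurable_snd
  · exact (measurable_pi_apply i).comp measurable_fst

lemma splice_preimage (d : ℕ) (s : Finset ℕ) (A : ℕ → Set Ω) :
    splice d ⁻¹' {x : ℕ → Ω | ∀ i ∈ s, x i ∈ A i} =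
      {a : ℕ → Ω | ∀ i ∈ s.filter (fun i => ¬ i < d), a i ∈ A i} ×ˢ
      {x : ℕ → Ω | ∀ i ∈ s.filter (fun i => i < d), x i ∈ A i} := by
  ext ⟨a, x⟩
  simp only [Set.mem_preimage, Set.mem_setOf_eq, Set.mem_prod, Finset.mem_filter, splice]
  constructor
  · intro h
    refine ⟨fun i hi => ?_, fun i hi => ?_⟩
    · have := h i hi.1; simpa [hi.2] using this
    · have := h i hi.1; simpa [hi.2] using this
  · rintro ⟨h1, h2⟩ i hi
    by_cases hd : i < d
    · simpa [hd] using h2 i ⟨hi, hd⟩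
    · simpa [hd] using h1 i ⟨hi, hd⟩

lemma splice_measurePreserving (μ₁ : Measure Ω) [IsProbabilityMeasure μ₁]
    (μ : Measure (ℕ → Ω)) [IsProbabilityMeasure μ]
    (hprod : ∀ (s : Finset ℕ) (A : ℕ → Set Ω), (∀ i, MeasurableSet (A i)) →
      μ {x | ∀ i ∈ s, x i ∈ A i} = ∏ i ∈ s, μ₁ (A i)) (d : ℕ) :
    MeasurePreserving (splice d) (μ.prod μ) μ := by
  refine ⟨measurable_splice d, ?_⟩
  haveI : IsProbabilityMeasure ((μ.prod μ).map (splice d)) :=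
    Measure.isProbabilityMeasure_map (measurable_splice d).aemeasurable
  refine ext_of_generate_finite (boxes Ω) generateFrom_boxes isPiSystem_boxes ?_ (by simp)
  rintro S ⟨s, A, hA, rfl⟩
  rw [Measure.map_apply (measurable_splice d) (box_measurable s A hA), splice_preimage,
    Measure.prod_prod, hprod _ _ hA, hprod _ _ hA, hprod _ _ hA, mul_comm,
    Finset.prod_filter_mul_prod_filter_not]

end Stmt8Aux

/-- Theorem 2.2: let `μ` be the countable product of a probability measure `μ₁`
(characterized by its values on cylinder sets). If integrable `f_d`, each depending
only on the first `d` coordinates, converge a.e. to an integrable `f`, with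
`|f_d - f| ≤ g_d` a.e. where the `g_d` depend only on the first `d` coordinates,
are integrable, and converge dominantly to zero, then for almost every anchor `a`
the anchored integrals of `f` converge to `∫ f dμ`. -/
theorem stmt_8 {Ω : Type*} [MeasurableSpace Ω]
    (μ₁ : Measure Ω) [IsProbabilityMeasure μ₁]
    (μ : Measure (ℕ → Ω)) [IsProbabilityMeasure μ]
    (hprod : ∀ (s : Finset ℕ) (A : ℕ → Set Ω), (∀ i, MeasurableSet (A i)) →
      μ {x | ∀ i ∈ s, x i ∈ A i} = ∏ i ∈ s, μ₁ (A i))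
    (f : (ℕ → Ω) → ℝ) (hf : Integrable f μ)
    (fd : ℕ → (ℕ → Ω) → ℝ)
    (hfd_int : ∀ d, Integrable (fd d) μ)
    (hfd_dep : ∀ d x y, (∀ i < d, x i = y i) → fd d x = fd d y)
    (hfd_lim : ∀ᵐ x ∂μ, Tendsto (fun d => fd d x) atTop (nhds (f x)))
    (gd : ℕ → (ℕ → Ω) → ℝ)
    (hgd_int : ∀ d, Integrable (gd d) μ)
    (hgd_dep : ∀ d x y, (∀ i < d, x i = y i) → gd d x = gd d y)
    (hbound : ∀ᵐ x ∂μ, ∀ d, |fd d x - f x| ≤ gd d x)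
    (hgd_lim : ∀ᵐ x ∂μ, Tendsto (fun d => gd d x) atTop (nhds 0))
    (g : (ℕ → Ω) → ℝ) (hg : Integrable g μ)
    (hgd_dom : ∀ d, ∀ᵐ x ∂μ, |gd d x| ≤ |g x|) :
    ∀ᵐ a ∂μ, Tendsto
      (fun d => ∫ x, f (fun i => if i < d then x i else a i) ∂μ)
      atTop (nhds (∫ x, f x ∂μ)) := by
  classical
  -- ∫ gd d → 0 by dominated convergence
  have hgd0 : Tendsto (fun d => ∫ x, gd d x ∂μ) atTop (nhds (0 : ℝ)) := by
    have h := tendsto_integral_of_dominated_convergence (μ := μ)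
      (F := fun d => gd d) (f := fun _ => (0 : ℝ)) (bound := fun x => |g x|)
      (fun d => (hgd_int d).aestronglyMeasurable) hg.abs
      (fun d => (hgd_dom d).mono fun x hx => by simpa [Real.norm_eq_abs] using hx)
      (hgd_lim.mono fun x hx => hx)
    simpa using h
  have hmp : ∀ d, MeasurePreserving (Stmt8Aux.splice d) (μ.prod μ) μ :=
    Stmt8Aux.splice_measurePreserving μ₁ μ hprod
  -- integrability of f ∘ splice on the product
  have hIntProd : ∀ d, Integrable (f ∘ Stmt8Aux.splice d) (μ.prod μ) := fun d =>
    ((hmp d).integrable_comp hf.aestronglyMeasurable).mpr hf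
  have hSlInt : ∀ d, ∀ᵐ a ∂μ, Integrable (fun x => f (Stmt8Aux.splice d (a, x))) μ := fun d =>
    (hIntProd d).prod_right_ae
  -- pull back the a.e. bound along splice
  have hbSlice : ∀ d, ∀ᵐ a ∂μ, ∀ᵐ x ∂μ,
      |fd d x - f (Stmt8Aux.splice d (a, x))| ≤ gd d x := by
    intro d
    have h1 : ∀ᵐ p ∂(μ.prod μ), ∀ d',
        |fd d' (Stmt8Aux.splice d p) - f (Stmt8Aux.splice d p)| ≤ gd d' (Stmt8Aux.splice d p) := by
      refine ae_of_ae_map (p := fun y => ∀ d', |fd d' y - f y| ≤ gd d' y)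
        (Stmt8Aux.measurable_splice (Ω := Ω) d).aemeasurable ?_
      rw [(hmp d).map_eq]
      exact hbound
    have h2 : ∀ᵐ p ∂(μ.prod μ), |fd d p.2 - f (Stmt8Aux.splice d p)| ≤ gd d p.2 := by
      refine h1.mono fun p hp => ?_
      have he : ∀ i < d, Stmt8Aux.splice d p i = p.2 i := fun i hi => if_pos hi
      have h3 := hp d
      rwa [hfd_dep d _ _ he, hgd_dep d _ _ he] at h3
    exact Measure.ae_ae_of_ae_prod h2
  have hall : ∀ᵐ a ∂μ, ∀ d,
      Integrable (fun x => f (Stmt8Aux.splice d (a, x))) μ ∧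
      (∀ᵐ x ∂μ, |fd d x - f (Stmt8Aux.splice d (a, x))| ≤ gd d x) :=
    ae_all_iff.mpr fun d => (hSlInt d).and (hbSlice d)
  filter_upwards [hall] with a ha
  rw [tendsto_iff_norm_sub_tendsto_zero]
  refine squeeze_zero (fun d => norm_nonneg _) (fun d => ?_)
    (by simpa using hgd0.const_mul (2 : ℝ))
  -- the bound : ‖I d - ∫ f‖ ≤ 2 * ∫ gd d
  have hia : Integrable (fun x => f (Stmt8Aux.splice d (a, x))) μ := (ha d).1
  have hbd : ∀ᵐ x ∂μ, |fd d x - f (Stmt8Aux.splice d (a, x))| ≤ gd d x := (ha d).2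
  have hI : (∫ x, f (fun i => if i < d then x i else a i) ∂μ) =
      ∫ x, f (Stmt8Aux.splice d (a, x)) ∂μ := rfl
  rw [Real.norm_eq_abs, hI]
  have key : ∀ h : (ℕ → Ω) → ℝ, Integrable h μ → (∀ᵐ x ∂μ, |h x| ≤ gd d x) →
      |∫ x, h x ∂μ| ≤ ∫ x, gd d x ∂μ := by
    intro h hint hb
    calc |∫ x, h x ∂μ| ≤ ∫ x, |h x| ∂μ := by
          simpa [Real.norm_eq_abs] using norm_integral_le_integral_norm (μ := μ) h
      _ ≤ ∫ x, gd d x ∂μ := integral_mono_ae hint.abs (hgd_int d) hb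
  have step1 : |(∫ x, f (Stmt8Aux.splice d (a, x)) ∂μ) - ∫ x, fd d x ∂μ| ≤ ∫ x, gd d x ∂μ := by
    rw [← integral_sub hia (hfd_int d)]
    exact key _ (hia.sub (hfd_int d)) (hbd.mono fun x hx => by rw [abs_sub_comm]; exact hx)
  have step2 : |(∫ x, fd d x ∂μ) - ∫ x, f x ∂μ| ≤ ∫ x, gd d x ∂μ := by
    rw [← integral_sub (hfd_int d) hf]
    exact key _ ((hfd_int d).sub hf) (hbound.mono fun x hx => hx d)
  calc |(∫ x, f (Stmt8Aux.splice d (a, x)) ∂μ) - ∫ x, f x ∂μ|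
      ≤ |(∫ x, f (Stmt8Aux.splice d (a, x)) ∂μ) - ∫ x, fd d x ∂μ|
        + |(∫ x, fd d x ∂μ) - ∫ x, f x ∂μ| := abs_sub_le _ _ _
    _ ≤ (∫ x, gd d x ∂μ) + ∫ x, gd d x ∂μ := add_le_add step1 step2
    _ = 2 * ∫ x, gd d x ∂μ := by ring
end

section
/- The anchored decomposition is unique: given $0 \in D$ and $f : D^d \to \mathbb{R}$, there exists exactly one family $(f_\mathfrak{u})_{\mathfrak{u} \subseteq \{1,\ldots,d\}}$ of functions, where $f_\mathfrak{u}$ depends only on the coordinates in $\mathfrak{u}$ and satisfies $f_\mathfrak{u}(\boldsymbol{x}_\mathfrak{u}) = 0$ whenever $x_j = 0$ for some $j \in \mathfrak{u}$, such that $f = \sum_{\mathfrak{u} \subseteq \{1,\ldots,d\}} f_\mathfrak{u}$. -/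
/-! Anchored decompositions are Möbius inversion on the Boolean lattice of coordinate sets.
Write `f(x_v; 0)` for `f` evaluated at `x` with the coordinates outside `v` set to the anchor.
In any anchored decomposition `∑_{w ⊆ u} F_w(x) = f(x_u; 0)`, since every `F_w` with `w ⊄ u` sees
an anchored coordinate; as summation over subsets is injective, this gives uniqueness.
Conversely `F_u(x) = ∑_{v ⊆ u} (-1)^{|u \ v|} f(x_v; 0)` sums back to `f`, and it vanishes when
`x_j = 0` for some `j ∈ u` because the terms for `v` and `insert j v` then cancel. -/

open Finset

namespace Finset

variable {α M : Type*} [DecidableEq α] [AddCommGroup M]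

def moebiusTransform (h : Finset α → M) (u : Finset α) : M :=
  ∑ v ∈ u.powerset, (-1 : ℤ) ^ #(u \ v) • h v

theorem moebiusTransform_insert (h : Finset α → M) {a : α} {u : Finset α} (ha : a ∉ u) :
    moebiusTransform h (insert a u) =
      moebiusTransform (fun v ↦ h (insert a v)) u - moebiusTransform h u := by
  have hsub : ∀ v ∈ u.powerset, a ∉ v := fun v hv hav ↦ ha (mem_powerset.1 hv hav)
  have without_a : ∀ v ∈ u.powerset,
      (-1 : ℤ) ^ #(insert a u \ v) • h v = -((-1 : ℤ) ^ #(u \ v) • h v) := by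
    intro v hv
    rw [insert_sdiff_of_notMem _ (hsub v hv), card_insert_of_notMem (by simp [ha]), pow_succ,
      mul_neg_one, neg_smul]
  have with_a : ∀ v ∈ u.powerset, (-1 : ℤ) ^ #(insert a u \ insert a v) • h (insert a v) =
      (-1 : ℤ) ^ #(u \ v) • h (insert a v) := by
    intro v hv
    rw [insert_sdiff_insert, sdiff_insert_of_notMem ha]
  simp only [moebiusTransform, sum_powerset_insert ha, sum_congr rfl without_a,
    sum_congr rfl with_a, sum_neg_distrib]
  abel

theorem moebiusTransform_eq_zero {h : Finset α → M} {j : α} {u : Finset α} (hj : j ∈ u)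
    (h_insert : ∀ v, h (insert j v) = h v) : moebiusTransform h u = 0 := by
  rw [← insert_erase hj, moebiusTransform_insert h (notMem_erase j u)]
  simp only [h_insert, sub_self]

theorem sum_powerset_moebiusTransform (h : Finset α → M) (w : Finset α) :
    ∑ u ∈ w.powerset, moebiusTransform h u = h w := by
  induction w using Finset.induction_on generalizing h with
  | empty => simp [moebiusTransform]
  | insert a s ha ih =>
    have hsub : ∀ u ∈ s.powerset, a ∉ u := fun u hu hau ↦ ha (mem_powerset.1 hu hau)
    rw [sum_powerset_insert ha, ← sum_add_distrib,
      sum_congr rfl fun u hu ↦ by rw [moebiusTransform_insert h (hsub u hu), add_sub_cancel],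
      ih]

theorem eq_of_sum_powerset_eq {a b : Finset α → M}
    (h : ∀ u : Finset α, ∑ w ∈ u.powerset, a w = ∑ w ∈ u.powerset, b w) : a = b := by
  funext u
  induction u using Finset.strongInduction with
  | H u ih =>
    have hu := h u
    rw [← add_sum_erase _ _ (mem_powerset_self u), ← add_sum_erase _ _ (mem_powerset_self u),
      sum_congr rfl fun w hw ↦ ih w ?_] at hu
    · exact add_right_cancel hu
    · obtain ⟨hne, hw⟩ := mem_erase.1 hw
      exact (mem_powerset.1 hw).lt_of_ne hne

end Finset

section Anchored

variable {ι D M : Type*} [Zero D] [AddCommGroup M]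

def IsAnchoredDecomposition [Fintype ι] (f : (ι → D) → M) (F : Finset ι → (ι → D) → M) :
    Prop :=
  (∀ u x y, (∀ j ∈ u, x j = y j) → F u x = F u y) ∧
  (∀ u x, (∃ j ∈ u, x j = 0) → F u x = 0) ∧
  (∀ x, f x = ∑ u, F u x)

variable [DecidableEq ι]

def anchoredTerm (f : (ι → D) → M) (u : Finset ι) (x : ι → D) : M :=
  moebiusTransform (fun v ↦ f (v.piecewise x 0)) u

theorem anchoredTerm_congr (f : (ι → D) → M) {u : Finset ι} {x y : ι → D}
    (hxy : ∀ j ∈ u, x j = y j) : anchoredTerm f u x = anchoredTerm f u y := by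
  refine sum_congr rfl fun v hv ↦ ?_
  dsimp only
  rw [piecewise_congr (s := v) (fun j hj ↦ hxy j (mem_powerset.1 hv hj)) fun _ _ ↦ rfl]

theorem anchoredTerm_eq_zero (f : (ι → D) → M) {u : Finset ι} {x : ι → D} {j : ι}
    (hj : j ∈ u) (hxj : x j = 0) : anchoredTerm f u x = 0 :=
  moebiusTransform_eq_zero hj fun v ↦ by
    rw [piecewise_insert, Function.update_eq_self_iff.2]
    exact piecewise_cases v x 0 (x j = ·) rfl hxj

theorem sum_anchoredTerm [Fintype ι] (f : (ι → D) → M) (x : ι → D) :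
    ∑ u, anchoredTerm f u x = f x := by
  rw [← powerset_univ]
  exact (sum_powerset_moebiusTransform _ _).trans (congrArg f (piecewise_univ x 0))

theorem isAnchoredDecomposition_anchoredTerm [Fintype ι] (f : (ι → D) → M) :
    IsAnchoredDecomposition f (anchoredTerm f) :=
  ⟨fun _ _ _ ↦ anchoredTerm_congr f, fun _ _ ⟨_, hj, hxj⟩ ↦ anchoredTerm_eq_zero f hj hxj,
    fun x ↦ (sum_anchoredTerm f x).symm⟩

namespace IsAnchoredDecomposition

variable [Fintype ι] {f : (ι → D) → M} {F : Finset ι → (ι → D) → M}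

theorem sum_powerset_eq (hF : IsAnchoredDecomposition f F) (u : Finset ι) (x : ι → D) :
    ∑ w ∈ u.powerset, F w x = f (u.piecewise x 0) := by
  obtain ⟨hdep, hvan, hsum⟩ := hF
  rw [hsum, ← sum_subset (subset_univ u.powerset)]
  · exact sum_congr rfl fun w hw ↦
      hdep w _ _ fun j hj ↦ (piecewise_eq_of_mem _ _ _ (mem_powerset.1 hw hj)).symm
  · intro w _ hw
    obtain ⟨j, hjw, hju⟩ := not_subset.1 (mt mem_powerset.2 hw)
    exact hvan w _ ⟨j, hjw, piecewise_eq_of_notMem _ _ _ hju⟩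

theorem unique {G : Finset ι → (ι → D) → M} (hF : IsAnchoredDecomposition f F)
    (hG : IsAnchoredDecomposition f G) : F = G := by
  funext u x
  refine congrFun (eq_of_sum_powerset_eq (a := (F · x)) (b := (G · x)) fun v ↦ ?_) u
  rw [hF.sum_powerset_eq, hG.sum_powerset_eq]

end IsAnchoredDecomposition

end Anchored

/-- Uniqueness of the anchored decomposition with anchor `0`: every `f : D^d → ℝ` admits
exactly one family `(f_u)_{u ⊆ {1,…,d}}` such that each `f_u` depends only on the
coordinates in `u`, vanishes whenever some coordinate indexed by `u` equals `0`, and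
`f = ∑_u f_u`. -/
theorem stmt_18 {D : Type*} [Zero D] (d : ℕ) (f : (Fin d → D) → ℝ) :
    ∃! F : Finset (Fin d) → (Fin d → D) → ℝ,
      (∀ u x y, (∀ j ∈ u, x j = y j) → F u x = F u y) ∧
      (∀ u x, (∃ j ∈ u, x j = 0) → F u x = 0) ∧
      (∀ x, f x = ∑ u ∈ (univ : Finset (Finset (Fin d))), F u x) :=
  ⟨anchoredTerm f, isAnchoredDecomposition_anchoredTerm f,
    fun _ hG ↦ (isAnchoredDecomposition_anchoredTerm f).unique hG |>.symm⟩
end
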